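/- Let A be an integral rig and define x ⪯ y iff there exists m ∈ ℕ with x^m ≤ y (canonical order), and x ∼ y iff x ⪯ y and y ⪯ x. Then ∼ is a rig congruence on A. -/

import Mathlib

/-- The canonical pre-order of a rig. -/
def rigLe {A : Type*} [CommSemiring A] (x y : A) : Prop := ∃ w, w + x = y

/-- `x ⪯ y` iff some power of `x` is below `y`. -/
def preceq {A : Type*} [CommSemiring A] (x y : A) : Prop := ∃ m : ℕ, rigLe (x ^ m) y

/-- `x ∼ y` iff `x ⪯ y` and `y ⪯ x`. -/
def simRel {A : Type*} [CommSemiring A] (x y : A) : Prop := preceq x y ∧ preceq y x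

/-!
In an integral rig addition is idempotent and `b ∣ a` implies `a ≤ b`, so a sum is below
every common upper bound of its terms. Expanding `(u + x) ^ (m + n)` binomially,
every monomial `u ^ k * x ^ (m + n - k)` has `k ≥ m` or `m + n - k ≥ n`, hence lies below
`u ^ m + x ^ n`. This makes `⪯` compatible with addition; compatibility with multiplication
follows from `u ^ m * x ^ n ∣ (u * x) ^ (m + n)`.
-/

section CommSemiring

variable {A : Type*} [CommSemiring A]

theorem rigLe_refl (a : A) : rigLe a a := ⟨0, zero_add a⟩

theorem rigLe_trans {a b c : A} : rigLe a b → rigLe b c → rigLe a c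
  | ⟨w, hw⟩, ⟨v, hv⟩ => ⟨v + w, by rw [add_assoc, hw, hv]⟩

theorem rigLe_zero (a : A) : rigLe 0 a := ⟨a, add_zero a⟩

theorem rigLe_add_left (a b : A) : rigLe a (b + a) := ⟨b, rfl⟩

theorem rigLe_add_right (a b : A) : rigLe a (a + b) := ⟨b, add_comm b a⟩

theorem rigLe_add {a b c d : A} : rigLe a b → rigLe c d → rigLe (a + c) (b + d)
  | ⟨w, hw⟩, ⟨v, hv⟩ => ⟨w + v, by rw [← hw, ← hv]; ring⟩

theorem rigLe_mul {a b c d : A} : rigLe a b → rigLe c d → rigLe (a * c) (b * d)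
  | ⟨w, hw⟩, ⟨v, hv⟩ => ⟨w * v + w * c + a * v, by rw [← hw, ← hv]; ring⟩

theorem rigLe_pow {a b : A} (h : rigLe a b) (n : ℕ) : rigLe (a ^ n) (b ^ n) := by
  induction n with
  | zero => simpa using rigLe_refl (1 : A)
  | succ n ih => simpa only [pow_succ] using rigLe_mul ih h

theorem preceq_refl (a : A) : preceq a a := ⟨1, by simpa using rigLe_refl a⟩

theorem preceq_trans {a b c : A} : preceq a b → preceq b c → preceq a c
  | ⟨m, hab⟩, ⟨n, hbc⟩ => ⟨m * n, by rw [pow_mul]; exact rigLe_trans (rigLe_pow hab n) hbc⟩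

end CommSemiring

section Integral

variable {A : Type*} [CommSemiring A] (hA : ∀ x : A, 1 + x = 1)
include hA

theorem rigLe_one (a : A) : rigLe a 1 := ⟨1, hA a⟩

theorem add_self_of_integral (a : A) : a + a = a := by
  rw [← mul_one a, ← mul_add, hA]

theorem rigLe_add_of_rigLe {a b c : A} (hac : rigLe a c) (hbc : rigLe b c) : rigLe (a + b) c := by
  simpa only [add_self_of_integral hA] using rigLe_add hac hbc

theorem rigLe_of_dvd {a b : A} (h : b ∣ a) : rigLe a b := by
  obtain ⟨c, rfl⟩ := h
  simpa using rigLe_mul (rigLe_refl b) (rigLe_one hA c)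

theorem rigLe_add_pow (u x : A) (m n : ℕ) : rigLe ((u + x) ^ (m + n)) (u ^ m + x ^ n) := by
  rw [add_pow]
  refine Finset.sum_induction _ (rigLe · _) (fun _ _ => rigLe_add_of_rigLe hA)
    (rigLe_zero _) fun k _ => ?_
  rcases le_or_gt m k with hmk | hkm
  · have hdvd : u ^ m ∣ u ^ k * x ^ (m + n - k) * (m + n).choose k :=
      ((pow_dvd_pow u hmk).mul_right _).mul_right _
    exact rigLe_trans (rigLe_of_dvd hA hdvd) (rigLe_add_right _ _)
  · have hdvd : x ^ n ∣ u ^ k * x ^ (m + n - k) * (m + n).choose k :=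
      ((pow_dvd_pow x (by omega)).mul_left _).mul_right _
    exact rigLe_trans (rigLe_of_dvd hA hdvd) (rigLe_add_left _ _)

theorem preceq_add {u v x y : A} : preceq u v → preceq x y → preceq (u + x) (v + y)
  | ⟨m, huv⟩, ⟨n, hxy⟩ => ⟨m + n, rigLe_trans (rigLe_add_pow hA u x m n) (rigLe_add huv hxy)⟩

theorem preceq_mul {u v x y : A} : preceq u v → preceq x y → preceq (u * x) (v * y)
  | ⟨m, huv⟩, ⟨n, hxy⟩ =>
    have hdvd : u ^ m * x ^ n ∣ (u * x) ^ (m + n) := by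
      rw [mul_pow]
      exact mul_dvd_mul (pow_dvd_pow u le_self_add) (pow_dvd_pow x le_add_self)
    ⟨m + n, rigLe_trans (rigLe_of_dvd hA hdvd) (rigLe_mul huv hxy)⟩

end Integral

/-- In an integral rig, `∼` is a rig congruence. -/
theorem simRel_congruence {A : Type*} [CommSemiring A]
    (hint : ∀ x : A, 1 + x = 1) :
    (∀ x : A, simRel x x) ∧
    (∀ x y : A, simRel x y → simRel y x) ∧
    (∀ x y z : A, simRel x y → simRel y z → simRel x z) ∧
    (∀ u v x y : A, simRel u v → simRel x y → simRel (u + x) (v + y)) ∧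
    (∀ u v x y : A, simRel u v → simRel x y → simRel (u * x) (v * y)) :=
  ⟨fun x => ⟨preceq_refl x, preceq_refl x⟩,
    fun _ _ h => ⟨h.2, h.1⟩,
    fun _ _ _ h₁ h₂ => ⟨preceq_trans h₁.1 h₂.1, preceq_trans h₂.2 h₁.2⟩,
    fun _ _ _ _ h₁ h₂ => ⟨preceq_add hint h₁.1 h₂.1, preceq_add hint h₁.2 h₂.2⟩,
    fun _ _ _ _ h₁ h₂ => ⟨preceq_mul hint h₁.1 h₂.1, preceq_mul hint h₁.2 h₂.2⟩⟩
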